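/- arXiv:0712.2749 — 2 statements merged into one kernel-verified Lean document; each statement's English description precedes it below -/
import Mathlib

section
/- If two finite simple graphs G_1 and G_2 have the same number of vertices n and satisfy t(F,G_1) = t(F,G_2) for every graph F, then G_1 and G_2 are isomorphic. -/
/-!
With equal vertex counts, equal densities give equal homomorphism counts `hom(F, Gᵢ)`.
Grouping homomorphisms by their kernel gives `hom(F, G) = ∑_c inj(F / c, G)` over the
equivalence relations `c` on `V(F)`, where the term `c = ⊥` is `inj(F, G)` and every other
quotient is smaller; so by induction on `|V(F)|` the numbers of injective homomorphisms agree
as well. This is cleanest for arbitrary binary relations `F`, which is harmless here: a relation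
with a loop has no homomorphism into a simple graph, and a loopless one has the same
homomorphisms as the simple graph it generates. Taking `F = G₁` and `F = G₂` yields injective
homomorphisms `G₁ → G₂ → G₁`; comparing edge counts, the first one is an isomorphism.
-/

/-- The homomorphism density `t(F,G)`: the probability that a uniformly random map
`V(F) → V(G)` is a graph homomorphism. -/
noncomputable def homDensity {k : ℕ} {V : Type*} [Fintype V]
    (F : SimpleGraph (Fin k)) (G : SimpleGraph V) : ℝ :=
  (Nat.card {f : Fin k → V // ∀ ⦃i j⦄, F.Adj i j → G.Adj (f i) (f j)} : ℝ) /
    (Fintype.card V : ℝ) ^ k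

universe u

open Function

namespace Setoid

variable {α : Type*}

instance [Finite α] : Finite (Setoid α) :=
  Finite.of_injective (fun c : Setoid α => (c : α → α → Prop)) fun _ _ h =>
    Setoid.ext fun a b => iff_of_eq (congrFun₂ h a b)

theorem card_quotient_lt [Finite α] {c : Setoid α} (hc : c ≠ ⊥) :
    Nat.card (Quotient c) < Nat.card α := by
  have := Fintype.ofFinite α
  have := Fintype.ofFinite (Quotient c)
  simp only [Nat.card_eq_fintype_card]
  refine Fintype.card_lt_of_surjective_not_injective _ Quotient.mk''_surjective ?_
  rwa [← ker_eq_bot_iff, ker_mk_eq]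

end Setoid

namespace RelHom

variable {α β γ : Type*} {r : α → α → Prop} {s : β → β → Prop}

instance [Finite α] [Finite β] : Finite (r →r s) := DFunLike.finite _

def kerEqEquiv (c : Setoid α) :
    {f : r →r s // Setoid.ker f = c} ≃
      {g : Relation.Map r (Quotient.mk c) (Quotient.mk c) →r s // Injective g} where
  toFun f :=
    ⟨⟨Quotient.lift f.1 fun a b h => by rwa [← f.2] at h, by
        rintro _ _ ⟨a, b, hab, rfl, rfl⟩
        exact f.1.map_rel hab⟩,
      fun x y => Quotient.inductionOn₂ x y fun a b h => Quotient.sound (f.2 ▸ h)⟩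
  invFun g :=
    ⟨⟨g.1 ∘ Quotient.mk c, fun h => g.1.map_rel ⟨_, _, h, rfl, rfl⟩⟩,
      Setoid.ext fun _ _ => g.2.eq_iff.trans Quotient.eq⟩
  left_inv _ := rfl
  right_inv g := Subtype.ext <| RelHom.ext fun x => Quotient.inductionOn x fun _ => rfl

theorem card_eq_sum_card_ker_eq [Finite α] [Finite β] [Fintype (Setoid α)] :
    Nat.card (r →r s) = ∑ c : Setoid α, Nat.card {f : r →r s // Setoid.ker f = c} := by
  rw [← Nat.card_sigma, Nat.card_congr (Equiv.sigmaFiberEquiv _)]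

theorem card_injective_eq_of_card_eq {s₁ : β → β → Prop} {s₂ : γ → γ → Prop}
    [Finite β] [Finite γ]
    (h : ∀ (α : Type u) [Finite α] (r : α → α → Prop), Nat.card (r →r s₁) = Nat.card (r →r s₂))
    (α : Type u) [Finite α] (r : α → α → Prop) :
    Nat.card {f : r →r s₁ // Injective f} = Nat.card {f : r →r s₂ // Injective f} := by
  induction hn : Nat.card α using Nat.strong_induction_on generalizing α with
  | _ n ih =>
    classical
    have := Fintype.ofFinite (Setoid α)
    have hker : ∀ c ∈ Finset.univ.erase ⊥, Nat.card {f : r →r s₁ // Setoid.ker f = c} =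
        Nat.card {f : r →r s₂ // Setoid.ker f = c} := fun c hc => by
      rw [Nat.card_congr (kerEqEquiv c), Nat.card_congr (kerEqEquiv c)]
      exact ih _ (hn ▸ Setoid.card_quotient_lt (Finset.ne_of_mem_erase hc)) _ _ rfl
    have hsum := h α r
    rw [card_eq_sum_card_ker_eq, card_eq_sum_card_ker_eq,
      ← Finset.add_sum_erase _ _ (Finset.mem_univ ⊥),
      ← Finset.add_sum_erase _ _ (Finset.mem_univ ⊥),
      Finset.sum_congr rfl hker, Nat.add_right_cancel_iff] at hsum
    simpa only [Setoid.ker_eq_bot_iff] using hsum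

theorem image_prodMap_subset (f : r →r s) :
    Prod.map f f '' {p : α × α | r p.1 p.2} ⊆ {p | s p.1 p.2} := by
  rintro _ ⟨p, hp, rfl⟩
  exact f.map_rel hp

theorem nonempty_relIso_of_injective [Finite α] [Finite β] (f : r →r s) (g : s →r r)
    (hf : Injective f) (hg : Injective g) : Nonempty (r ≃r s) := by
  have hfg : Bijective f := (Nat.bijective_iff_injective_and_card f).2
    ⟨hf, (Nat.card_le_card_of_injective f hf).antisymm (Nat.card_le_card_of_injective g hg)⟩
  have himage : Prod.map f f '' {p | r p.1 p.2} = {p : β × β | s p.1 p.2} := by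
    refine Set.eq_of_subset_of_ncard_le f.image_prodMap_subset ?_
    rw [Set.ncard_image_of_injective _ (hf.prodMap hf)]
    calc {p : β × β | s p.1 p.2}.ncard = (Prod.map g g '' {p | s p.1 p.2}).ncard :=
          (Set.ncard_image_of_injective _ (hg.prodMap hg)).symm
      _ ≤ {p : α × α | r p.1 p.2}.ncard := Set.ncard_le_ncard g.image_prodMap_subset
  refine ⟨⟨Equiv.ofBijective f hfg, fun {a b} => ⟨fun hab => ?_, f.map_rel⟩⟩⟩
  obtain ⟨p, hp, hpab⟩ : (f a, f b) ∈ Prod.map f f '' {p | r p.1 p.2} := himage ▸ hab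
  rwa [show p = (a, b) from hf.prodMap hf hpab] at hp

theorem exists_injective_of_card_injective_eq [Finite β] {s₁ : β → β → Prop}
    {s₂ : γ → γ → Prop}
    (h : ∀ (α : Type) [Finite α] (r : α → α → Prop),
      Nat.card {f : r →r s₁ // Injective f} = Nat.card {f : r →r s₂ // Injective f}) :
    ∃ f : s₁ →r s₂, Injective f := by
  let e := RelIso.preimage (Finite.equivFin β).symm s₁
  have hpos : 0 < Nat.card {f : (Finite.equivFin β).symm ⁻¹'o s₁ →r s₁ // Injective f} :=
    Nat.card_pos_iff.2 ⟨⟨⟨e, e.injective⟩⟩, inferInstance⟩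
  rw [h] at hpos
  obtain ⟨⟨f, hf⟩⟩ := (Nat.card_pos_iff.1 hpos).1
  exact ⟨f.comp e.symm, hf.comp e.symm.injective⟩

end RelHom

namespace SimpleGraph

variable {V W : Type*}

theorem natCast_card_hom_eq_homDensity_mul {k : ℕ} [Fintype V] (F : SimpleGraph (Fin k))
    (G : SimpleGraph V) : (Nat.card (F →g G) : ℝ) = homDensity F G * Fintype.card V ^ k := by
  rcases eq_or_ne ((Fintype.card V : ℝ) ^ k) 0 with h0 | h0
  · obtain ⟨hV, hk⟩ := pow_eq_zero_iff'.1 h0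
    have : IsEmpty V := Fintype.card_eq_zero_iff.1 (by exact_mod_cast hV)
    have : IsEmpty (F →g G) := ⟨fun f => isEmptyElim (f ⟨0, Nat.pos_of_ne_zero hk⟩)⟩
    rw [h0, mul_zero, Nat.card_of_isEmpty, Nat.cast_zero]
  · rw [homDensity, div_mul_cancel₀ _ h0]
    exact congrArg _ (Nat.card_congr
      ⟨fun f => ⟨f, fun _ _ h => f.map_rel h⟩, fun f => ⟨f.1, @f.2⟩, fun _ => rfl, fun _ => rfl⟩)

theorem card_hom_eq_of_homDensity_eq {k : ℕ} [Fintype V] [Fintype W] {F : SimpleGraph (Fin k)}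
    {G₁ : SimpleGraph V} {G₂ : SimpleGraph W} (hV : Fintype.card V = Fintype.card W)
    (h : homDensity F G₁ = homDensity F G₂) : Nat.card (F →g G₁) = Nat.card (F →g G₂) := by
  have := natCast_card_hom_eq_homDensity_mul F G₁
  rw [h, hV, ← natCast_card_hom_eq_homDensity_mul] at this
  exact_mod_cast this

theorem card_hom_eq_of_forall_fin {G₁ : SimpleGraph V} {G₂ : SimpleGraph W}
    (h : ∀ (k : ℕ) (F : SimpleGraph (Fin k)), Nat.card (F →g G₁) = Nat.card (F →g G₂))
    {α : Type} [Finite α] (F : SimpleGraph α) : Nat.card (F →g G₁) = Nat.card (F →g G₂) := by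
  let e := Iso.map (Finite.equivFin α) F
  rw [Nat.card_congr (e.relHomCongr (.refl G₁.Adj)),
    Nat.card_congr (e.relHomCongr (.refl G₂.Adj))]
  exact h _ _

theorem isEmpty_relHom_adj_of_refl {α : Type*} {r : α → α → Prop} {a : α} (ha : r a a)
    (G : SimpleGraph V) : IsEmpty (r →r G.Adj) :=
  ⟨fun f => (f.map_rel ha).ne rfl⟩

def relHomAdjEquivHomFromRel {α : Type*} {r : α → α → Prop} (hr : ∀ a, ¬ r a a)
    (G : SimpleGraph V) : (r →r G.Adj) ≃ (fromRel r →g G) where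
  toFun f := ⟨f, fun h => h.2.elim f.map_rel fun h' => (f.map_rel h').symm⟩
  invFun f := ⟨f, fun h => f.map_rel ⟨fun hab => hr _ (hab ▸ h), Or.inl h⟩⟩
  left_inv _ := rfl
  right_inv _ := rfl

theorem card_relHom_adj_eq_of_forall_fin {G₁ : SimpleGraph V} {G₂ : SimpleGraph W}
    (h : ∀ (k : ℕ) (F : SimpleGraph (Fin k)), Nat.card (F →g G₁) = Nat.card (F →g G₂))
    (α : Type) [Finite α] (r : α → α → Prop) :
    Nat.card (r →r G₁.Adj) = Nat.card (r →r G₂.Adj) := by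
  by_cases hr : ∃ a, r a a
  · obtain ⟨a, ha⟩ := hr
    have := isEmpty_relHom_adj_of_refl ha G₁
    have := isEmpty_relHom_adj_of_refl ha G₂
    rw [Nat.card_of_isEmpty, Nat.card_of_isEmpty]
  · rw [not_exists] at hr
    rw [Nat.card_congr (relHomAdjEquivHomFromRel hr G₁),
      Nat.card_congr (relHomAdjEquivHomFromRel hr G₂)]
    exact card_hom_eq_of_forall_fin h _

end SimpleGraph

/-- If two finite graphs have the same number `n` of vertices and the same homomorphism
densities `t(F,·)` for every graph `F`, then they are isomorphic. -/
theorem iso_of_card_eq_of_homDensity_eq {n : ℕ} {V₁ V₂ : Type*} [Fintype V₁] [Fintype V₂]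
    (G₁ : SimpleGraph V₁) (G₂ : SimpleGraph V₂)
    (hn₁ : Fintype.card V₁ = n) (hn₂ : Fintype.card V₂ = n)
    (h : ∀ (k : ℕ) (F : SimpleGraph (Fin k)), homDensity F G₁ = homDensity F G₂) :
    Nonempty (G₁ ≃g G₂) := by
  have hhom (k : ℕ) (F : SimpleGraph (Fin k)) : Nat.card (F →g G₁) = Nat.card (F →g G₂) :=
    SimpleGraph.card_hom_eq_of_homDensity_eq (hn₁.trans hn₂.symm) (h k F)
  have hinj := RelHom.card_injective_eq_of_card_eq
    (SimpleGraph.card_relHom_adj_eq_of_forall_fin hhom)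
  obtain ⟨f, hf⟩ := RelHom.exists_injective_of_card_injective_eq hinj
  obtain ⟨g, hg⟩ := RelHom.exists_injective_of_card_injective_eq fun α _ r => (hinj α r).symm
  exact RelHom.nonempty_relIso_of_injective f g hf hg
end

section
/- Let H be an exchangeable random infinite graph on ℕ such that the tail σ-field ∩_{n≥1} σ(H restricted to vertices {n, n+1, ...}) is trivial. Then for every labelled finite graph F on [k], P(H ⊇ F ∪ F_k) = P(H ⊇ F)^2, where F_k is the copy of F shifted to vertex set {k+1,...,2k}. -/
open MeasureTheory ProbabilityTheory Filter Finset Topology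

/-!
Place disjoint copies `B j` of `F` at offsets `j (k + 1)`. By exchangeability every `B j` has
probability `p = P(H ⊇ F)` and every pair `B i ∩ B j` has probability `q = P(H ⊇ F ∪ F_k)`.
For such equicorrelated events the averages of the indicators over the blocks `[4^m, 2·4^m)`
satisfy `E (avg_m - avg_{m+1})² ≤ 2 / 4^m`, which is summable enough to make them converge
almost surely to a limit `T`. The events of the `m`-th block only involve vertices `≥ m`, so `T`
is tail measurable, hence independent of everything when the tail is trivial.
Then `q = E[1_{B 0} T] = P(B 0) E T = p²`.
-/

lemma exists_perm_eqOn_Iio_of_injOn (m : ℕ) {f : ℕ → ℕ} (hf : Set.InjOn f (Set.Iio m)) :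
    ∃ σ : Equiv.Perm ℕ, {i | σ i ≠ i}.Finite ∧ ∀ i < m, σ i = f i := by
  induction m with
  | zero => exact ⟨1, by simp, by simp⟩
  | succ m ih =>
    obtain ⟨σ, hfin, hσ⟩ := ih (hf.mono fun i hi => Nat.lt_succ_of_lt hi)
    refine ⟨σ.trans (Equiv.swap (σ m) (f m)), ?_, fun i hi => ?_⟩
    · refine (hfin.union (Set.toFinite {σ m, f m})).subset fun i hi => ?_
      by_contra h
      simp only [Set.mem_union, Set.mem_ofPred_eq, not_or, not_not, Set.mem_insert_iff,
        Set.mem_singleton_iff] at h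
      simp [h.1, Equiv.swap_apply_of_ne_of_ne h.2.1 h.2.2] at hi
    rcases (Nat.lt_succ_iff_lt_or_eq.mp hi) with hi | rfl
    · have hm : f i ≠ σ m := by rw [← hσ i hi]; exact σ.injective.ne hi.ne
      have hfm : f i ≠ f m := fun h => hi.ne (hf (by simp; omega) (by simp) h)
      simp [hσ i hi, Equiv.swap_apply_of_ne_of_ne hm hfm]
    · simp

def relabel (τ : ℕ → ℕ) (x : ℕ → ℕ → Bool) : ℕ → ℕ → Bool := fun i j => x (τ i) (τ j)

def containsShift {k : ℕ} (F : SimpleGraph (Fin k)) (t : ℕ) : Set (ℕ → ℕ → Bool) :=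
  {x | ∀ i j : Fin k, F.Adj i j → x (i + t) (j + t) = true}

lemma measurableSet_containsShift {k : ℕ} (F : SimpleGraph (Fin k)) (t : ℕ) :
    MeasurableSet (containsShift F t) := by
  simp only [containsShift, Set.ofPred_forall]
  refine .iInter fun i => .iInter fun j => .iInter fun _ => measurableSet_eq_fun ?_ measurable_const
  fun_prop

lemma relabel_preimage_containsShift {k : ℕ} (F : SimpleGraph (Fin k)) {τ : ℕ → ℕ} {s t : ℕ}
    (hτ : ∀ i : Fin k, τ (i + s) = i + t) :
    relabel τ ⁻¹' containsShift F s = containsShift F t := by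
  ext x
  simp [containsShift, relabel, hτ]

section Exchangeable

variable {Ω : Type*} [MeasurableSpace Ω] {μ : Measure Ω} {H : Ω → ℕ → ℕ → Bool}
  {k : ℕ} (F : SimpleGraph (Fin k))

lemma measure_preimage_relabel_preimage (hH : Measurable H)
    (hexch : ∀ σ : Equiv.Perm ℕ, {i | σ i ≠ i}.Finite →
      Measure.map (fun ω => fun i j : ℕ => H ω (σ i) (σ j)) μ = Measure.map H μ)
    {σ : Equiv.Perm ℕ} (hσ : {i | σ i ≠ i}.Finite) {E : Set (ℕ → ℕ → Bool)}
    (hE : MeasurableSet E) :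
    μ (H ⁻¹' (relabel σ ⁻¹' E)) = μ (H ⁻¹' E) := by
  have := congrArg (· E) (hexch σ hσ)
  rwa [Measure.map_apply (by fun_prop) hE, Measure.map_apply hH hE] at this

variable (hH : Measurable H)
  (hexch : ∀ σ : Equiv.Perm ℕ, {i | σ i ≠ i}.Finite →
      Measure.map (fun ω => fun i j : ℕ => H ω (σ i) (σ j)) μ = Measure.map H μ)
include hH hexch

lemma measure_preimage_containsShift (a : ℕ) :
    μ (H ⁻¹' containsShift F a) = μ (H ⁻¹' containsShift F 0) := by
  obtain ⟨σ, hσ, hσf⟩ := exists_perm_eqOn_Iio_of_injOn k (f := (a + ·))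
    fun i _ j _ h => Nat.add_left_cancel h
  rw [← measure_preimage_relabel_preimage hH hexch hσ (measurableSet_containsShift F 0),
    relabel_preimage_containsShift F (s := 0) (t := a) fun i => by simp [hσf i i.isLt, add_comm]]

lemma measure_preimage_containsShift_inter {a b : ℕ} (hab : a + k ≤ b) :
    μ (H ⁻¹' containsShift F a ∩ H ⁻¹' containsShift F b)
      = μ (H ⁻¹' containsShift F 0 ∩ H ⁻¹' containsShift F k) := by
  obtain ⟨σ, hσ, hσf⟩ := exists_perm_eqOn_Iio_of_injOn (2 * k)
    (f := fun i => if i < k then a + i else b + (i - k)) fun i hi j hj h => by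
      simp only [Set.mem_Iio] at hi hj h
      split_ifs at h <;> omega
  have h0 : ∀ i : Fin k, σ (i + 0) = i + a := fun i => by
    rw [hσf _ (by omega)]; simp [add_comm]
  have hk : ∀ i : Fin k, σ (i + k) = i + b := fun i => by
    rw [hσf _ (by omega)]; simp [add_comm]
  rw [← Set.preimage_inter, ← Set.preimage_inter, ← measure_preimage_relabel_preimage hH hexch hσ
    ((measurableSet_containsShift F 0).inter (measurableSet_containsShift F k)),
    Set.preimage_inter (f := relabel σ), relabel_preimage_containsShift F h0,
    relabel_preimage_containsShift F hk]

end Exchangeable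

section Averages

variable {Ω : Type*} {B : ℕ → Set Ω}

noncomputable def avgIndicator (B : ℕ → Set Ω) (s : Finset ℕ) (ω : Ω) : ℝ :=
  (#s : ℝ)⁻¹ * ∑ j ∈ s, (B j).indicator 1 ω

lemma avgIndicator_nonneg (s : Finset ℕ) (ω : Ω) : 0 ≤ avgIndicator B s ω :=
  mul_nonneg (by positivity) (sum_nonneg fun j _ => Set.indicator_nonneg (by simp) ω)

lemma avgIndicator_le_one (s : Finset ℕ) (ω : Ω) : avgIndicator B s ω ≤ 1 := by
  have : ∑ j ∈ s, (B j).indicator 1 ω ≤ (#s : ℝ) := by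
    simpa using sum_le_card_nsmul s _ (1 : ℝ) fun j _ => Set.indicator_le_self' (by simp) ω
  exact inv_mul_le_one_of_le₀ this (by positivity)

lemma abs_avgIndicator_le_one (s : Finset ℕ) (ω : Ω) : |avgIndicator B s ω| ≤ 1 :=
  abs_le.2 ⟨by linarith [avgIndicator_nonneg (B := B) s ω], avgIndicator_le_one s ω⟩

lemma abs_avgIndicator_sub_le_one (s t : Finset ℕ) (ω : Ω) :
    |avgIndicator B s ω - avgIndicator B t ω| ≤ 1 :=
  abs_sub_le_of_nonneg_of_le (avgIndicator_nonneg s ω) (avgIndicator_le_one s ω)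
    (avgIndicator_nonneg t ω) (avgIndicator_le_one t ω)

lemma measurable_avgIndicator {m : MeasurableSpace Ω} {s : Finset ℕ}
    (hB : ∀ j ∈ s, MeasurableSet[m] (B j)) : Measurable[m] (avgIndicator B s) :=
  (Finset.measurable_sum _ fun j hj => measurable_const.indicator (hB j hj)).const_mul _

variable [MeasurableSpace Ω] {μ : Measure Ω} [IsFiniteMeasure μ] (hB : ∀ j, MeasurableSet (B j))
include hB

lemma integrable_avgIndicator_mul (s t : Finset ℕ) :
    Integrable (fun ω => avgIndicator B s ω * avgIndicator B t ω) μ := by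
  refine .of_bound (C := 1) ?_ (ae_of_all _ fun ω => ?_)
  · exact ((measurable_avgIndicator fun j _ => hB j).mul
      (measurable_avgIndicator fun j _ => hB j)).aestronglyMeasurable
  · rw [Real.norm_eq_abs, abs_mul]
    exact mul_le_one₀ (abs_avgIndicator_le_one s ω) (abs_nonneg _) (abs_avgIndicator_le_one t ω)

lemma integrable_sq_avgIndicator_sub (s t : Finset ℕ) :
    Integrable (fun ω => (avgIndicator B s ω - avgIndicator B t ω) ^ 2) μ := by
  refine .of_bound (C := 1) ?_ (ae_of_all _ fun ω => ?_)
  · exact (((measurable_avgIndicator fun j _ => hB j).sub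
      (measurable_avgIndicator fun j _ => hB j)).pow_const 2).aestronglyMeasurable
  · rw [Real.norm_eq_abs, abs_pow]
    exact pow_le_one₀ (abs_nonneg _) (abs_avgIndicator_sub_le_one s t ω)

lemma setIntegral_avgIndicator {A : Set Ω} {s : Finset ℕ} (hs : s.Nonempty) {r : ℝ}
    (hA : ∀ j ∈ s, μ.real (A ∩ B j) = r) :
    ∫ ω in A, avgIndicator B s ω ∂μ = r := by
  unfold avgIndicator
  rw [integral_const_mul, integral_finsetSum _ fun j _ => (integrable_const 1).indicator (hB j)]
  simp_rw [setIntegral_indicator (hB _), Pi.one_apply, setIntegral_const, smul_eq_mul, mul_one]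
  rw [sum_congr rfl hA, sum_const, nsmul_eq_mul, inv_mul_cancel_left₀ (by simpa using hs.ne_empty)]

lemma integral_sum_indicator_mul_sum_indicator (s t : Finset ℕ) :
    ∫ ω, (∑ j ∈ s, (B j).indicator 1 ω) * ∑ l ∈ t, (B l).indicator 1 ω ∂μ
      = ∑ j ∈ s, ∑ l ∈ t, μ.real (B j ∩ B l) := by
  have (j l : ℕ) (ω : Ω) : (B j).indicator 1 ω * (B l).indicator 1 ω
      = (B j ∩ B l).indicator (1 : Ω → ℝ) ω := by
    rw [Set.inter_indicator_one, Pi.mul_apply]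
  simp_rw [sum_mul_sum, this]
  rw [integral_finsetSum _ fun j _ => integrable_finsetSum _ fun l _ =>
    (integrable_const 1).indicator ((hB j).inter (hB l))]
  refine sum_congr rfl fun j _ => ?_
  rw [integral_finsetSum _ fun l _ => (integrable_const 1).indicator ((hB j).inter (hB l))]
  exact sum_congr rfl fun l _ => integral_indicator_one ((hB j).inter (hB l))

variable {p q : ℝ} (hp : ∀ j, μ.real (B j) = p) (hq : ∀ i j, i ≠ j → μ.real (B i ∩ B j) = q)
include hp hq

lemma integral_avgIndicator_mul {s t : Finset ℕ} (hs : s.Nonempty) (ht : t.Nonempty) :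
    ∫ ω, avgIndicator B s ω * avgIndicator B t ω ∂μ
      = q + (p - q) * #(s ∩ t) / (#s * #t) := by
  have hsum : ∑ j ∈ s, ∑ l ∈ t, μ.real (B j ∩ B l) = #s * #t * q + #(s ∩ t) * (p - q) := by
    have (j l : ℕ) : μ.real (B j ∩ B l) = q + if j = l then p - q else 0 := by
      split_ifs with h
      · rw [h, Set.inter_self, hp]; ring
      · rw [hq j l h, add_zero]
    simp_rw [this, sum_add_distrib, sum_ite_eq, sum_const, ← sum_filter, sum_const,
      filter_mem_eq_inter, nsmul_eq_mul]
    ring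
  unfold avgIndicator
  simp_rw [mul_mul_mul_comm _ (∑ j ∈ s, _)]
  rw [integral_const_mul, integral_sum_indicator_mul_sum_indicator hB, hsum]
  have : (#s : ℝ) ≠ 0 := by simpa using hs.ne_empty
  have : (#t : ℝ) ≠ 0 := by simpa using ht.ne_empty
  field_simp

lemma integral_sq_avgIndicator_sub {s t : Finset ℕ} (hs : s.Nonempty) (ht : t.Nonempty)
    (hst : Disjoint s t) :
    ∫ ω, (avgIndicator B s ω - avgIndicator B t ω) ^ 2 ∂μ
      = (p - q) * ((#s : ℝ)⁻¹ + (#t : ℝ)⁻¹) := by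
  have hi := integrable_avgIndicator_mul (μ := μ) hB
  have : (#s : ℝ) ≠ 0 := by simpa using hs.ne_empty
  have : (#t : ℝ) ≠ 0 := by simpa using ht.ne_empty
  simp_rw [sub_sq', sq, mul_assoc]
  rw [integral_sub ?_ ((hi s t).const_mul 2), integral_add (hi s s) (hi t t),
    integral_const_mul, integral_avgIndicator_mul hB hp hq hs hs,
    integral_avgIndicator_mul hB hp hq ht ht, integral_avgIndicator_mul hB hp hq hs ht,
    inter_self, inter_self, disjoint_iff_inter_eq_empty.1 hst, card_empty, Nat.cast_zero]
  · field_simp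
    ring
  · exact (hi s s).add (hi t t)

end Averages

lemma abs_le_mul_sq_add_inv {a : ℝ} (ha : 0 < a) (x : ℝ) : |x| ≤ a * x ^ 2 + a⁻¹ := by
  refine le_of_mul_le_mul_left ?_ ha
  rw [mul_add, mul_inv_cancel₀ ha.ne', ← sq_abs x]
  nlinarith [sq_nonneg (a * |x| - 1)]

section Convergence

variable {Ω : Type*} [MeasurableSpace Ω] {μ : Measure Ω}

lemma ae_summable_of_summable_integral {f : ℕ → Ω → ℝ} (hf0 : ∀ n ω, 0 ≤ f n ω)
    (hf : ∀ n, Integrable (f n) μ) (hs : Summable fun n => ∫ ω, f n ω ∂μ) :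
    ∀ᵐ ω ∂μ, Summable fun n => f n ω := by
  have hmeas (n : ℕ) : AEMeasurable (fun ω => ENNReal.ofReal (f n ω)) μ :=
    (hf n).aemeasurable.ennreal_ofReal
  have hfin : ∫⁻ ω, ∑' n, ENNReal.ofReal (f n ω) ∂μ ≠ ⊤ := by
    rw [lintegral_tsum hmeas]
    simp_rw [← ofReal_integral_eq_lintegral_ofReal (hf _) (ae_of_all _ (hf0 _))]
    rw [← ENNReal.ofReal_tsum_of_nonneg (fun n => integral_nonneg (hf0 n)) hs]
    exact ENNReal.ofReal_ne_top
  filter_upwards [ae_lt_top' (AEMeasurable.tsum hmeas) hfin] with ω hω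
  simpa [ENNReal.toReal_ofReal (hf0 _ ω)] using ENNReal.summable_toReal hω.ne

def block (m : ℕ) : Finset ℕ := Ico (4 ^ m) (2 * 4 ^ m)

lemma card_block (m : ℕ) : #(block m) = 4 ^ m := by
  simp only [block, Nat.card_Ico]; omega

lemma block_nonempty (m : ℕ) : (block m).Nonempty :=
  nonempty_Ico.2 (by have := Nat.one_le_pow m 4 (by norm_num); omega)

lemma disjoint_block_succ (m : ℕ) : Disjoint (block m) (block (m + 1)) := by
  simp only [block, disjoint_left, mem_Ico, pow_succ]; omega

lemma lt_of_mem_block {m j : ℕ} (hj : j ∈ block m) : m < j :=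
  (Nat.lt_pow_self (by norm_num)).trans_le (mem_Ico.1 hj).1

lemma ae_cauchySeq_avgIndicator_block [IsProbabilityMeasure μ] {B : ℕ → Set Ω}
    (hB : ∀ j, MeasurableSet (B j)) {p q : ℝ} (hp : ∀ j, μ.real (B j) = p)
    (hq : ∀ i j, i ≠ j → μ.real (B i ∩ B j) = q) :
    ∀ᵐ ω ∂μ, CauchySeq fun m => avgIndicator B (block m) ω := by
  set D := fun m ω => avgIndicator B (block m) ω - avgIndicator B (block (m + 1)) ω
  have hpq : p - q ≤ 1 := by
    linarith [hp 0 ▸ measureReal_le_one (μ := μ) (s := B 0),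
      hq 0 1 zero_ne_one ▸ measureReal_nonneg (μ := μ) (s := B 0 ∩ B 1)]
  -- `∫ D m ^ 2 ≤ 2 / 4 ^ m`; the weight `2 ^ m` keeps this summable while
  -- `|D m| ≤ 2 ^ m * D m ^ 2 + 2⁻¹ ^ m` (`abs_le_mul_sq_add_inv`) still controls `|D m|`.
  have hD (m : ℕ) : ∫ ω, 2 ^ m * D m ω ^ 2 ∂μ ≤ 2 * (1 / 2) ^ m := by
    rw [integral_const_mul, integral_sq_avgIndicator_sub hB hp hq (block_nonempty m)
      (block_nonempty _) (disjoint_block_succ m), card_block, card_block]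
    have h4 : ((4 ^ m : ℕ) : ℝ) = 2 ^ m * 2 ^ m := by push_cast; rw [← mul_pow]; norm_num
    have h4' : ((4 ^ (m + 1) : ℕ) : ℝ) = 4 * (2 ^ m * 2 ^ m) := by
      rw [pow_succ', Nat.cast_mul, h4]; norm_num
    have ha : (0 : ℝ) < 2 ^ m := by positivity
    rw [h4, h4', one_div_pow]
    generalize (2 : ℝ) ^ m = a at ha ⊢
    field_simp
    linarith
  have hsum : Summable fun m => ∫ ω, 2 ^ m * D m ω ^ 2 ∂μ :=
    .of_nonneg_of_le (fun m => integral_nonneg fun ω => by positivity) hD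
      (summable_geometric_two.mul_left 2)
  filter_upwards [ae_summable_of_summable_integral (fun m ω => by positivity)
    (fun m => (integrable_sq_avgIndicator_sub hB _ _).const_mul _) hsum] with ω hω
  refine cauchySeq_of_summable_dist (.of_nonneg_of_le (fun _ => dist_nonneg) (fun m => ?_)
    (hω.add summable_geometric_two))
  simpa [Real.dist_eq] using abs_le_mul_sq_add_inv (pow_pos two_pos m) (D m ω)

end Convergence

lemma measurable_limsup_of_eventually {Ω : Type*} {m : MeasurableSpace Ω} {f : ℕ → Ω → ℝ}
    (hf : ∀ᶠ i in atTop, Measurable[m] (f i)) :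
    Measurable[m] fun ω => limsup (fun i => f i ω) atTop := by
  obtain ⟨N, hN⟩ := eventually_atTop.1 hf
  rw [funext fun ω => (limsup_nat_add (fun i => f i ω) N).symm]
  exact Measurable.limsup fun i => hN _ (Nat.le_add_left N i)

section Tail

variable {Ω : Type*} [MeasurableSpace Ω] {μ : Measure Ω}

lemma indepFun_of_measure_preimage_eq_zero_or_one [IsProbabilityMeasure μ] {β γ : Type*}
    [MeasurableSpace β] [MeasurableSpace γ] (X : Ω → β) {Y : Ω → γ} (hY : Measurable Y)
    (h01 : ∀ t, MeasurableSet t → μ (Y ⁻¹' t) = 0 ∨ μ (Y ⁻¹' t) = 1) :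
    IndepFun X Y μ := by
  refine indepFun_iff_measure_inter_preimage_eq_mul.2 fun s t _ ht => ?_
  rcases h01 t ht with h | h
  · rw [h, mul_zero]
    exact measure_mono_null Set.inter_subset_right h
  · rw [h, mul_one, measure_inter_conull ((prob_compl_eq_zero_iff (hY ht)).2 h)]

lemma integral_eq_of_tendsto_of_integral_eq {ν : Measure Ω} [IsFiniteMeasure ν]
    {f : ℕ → Ω → ℝ} {g : Ω → ℝ} (hf : ∀ n, Measurable (f n)) (hf1 : ∀ n ω, |f n ω| ≤ 1)
    (hfg : ∀ᵐ ω ∂ν, Tendsto (fun n => f n ω) atTop (𝓝 (g ω))) {c : ℝ}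
    (hc : ∀ n, ∫ ω, f n ω ∂ν = c) :
    ∫ ω, g ω ∂ν = c :=
  tendsto_nhds_unique (tendsto_integral_of_dominated_convergence (fun _ => 1)
    (fun n => (hf n).aestronglyMeasurable) (integrable_const 1) (fun n => ae_of_all _ (hf1 n)) hfg)
    (by simp_rw [hc]; exact tendsto_const_nhds)

theorem measureReal_inter_eq_sq_of_tail_zero_or_one [IsProbabilityMeasure μ] {B : ℕ → Set Ω}
    (hB : ∀ j, MeasurableSet (B j)) {𝒢 : ℕ → MeasurableSpace Ω}
    (hB𝒢 : ∀ n j, n ≤ j → MeasurableSet[𝒢 n] (B j))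
    (htail : ∀ s, MeasurableSet[⨅ n, 𝒢 n] s → μ s = 0 ∨ μ s = 1)
    {p q : ℝ} (hp : ∀ j, μ.real (B j) = p) (hq : ∀ i j, i ≠ j → μ.real (B i ∩ B j) = q) :
    q = p ^ 2 := by
  set T := fun ω => limsup (fun m => avgIndicator B (block m) ω) atTop
  have hmeas (m : ℕ) : Measurable (avgIndicator B (block m)) :=
    measurable_avgIndicator fun j _ => hB j
  have hlim : ∀ᵐ ω ∂μ, Tendsto (fun m => avgIndicator B (block m) ω) atTop (𝓝 (T ω)) := by
    filter_upwards [ae_cauchySeq_avgIndicator_block hB hp hq] with ω hω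
    obtain ⟨l, hl⟩ := cauchySeq_tendsto_of_complete hω
    rwa [show T ω = l from hl.limsup_eq]
  have hT_tail : Measurable[⨅ n, 𝒢 n] T := fun s hs =>
    MeasurableSpace.measurableSet_iInf.2 fun n => measurable_limsup_of_eventually
      ((eventually_ge_atTop n).mono fun m hm => measurable_avgIndicator fun j hj =>
        hB𝒢 n j (hm.trans (lt_of_mem_block hj).le)) hs
  have hindep : IndepFun ((B 0).indicator (1 : Ω → ℝ)) T μ :=
    indepFun_of_measure_preimage_eq_zero_or_one _ (Measurable.limsup hmeas)
      fun t ht => htail _ (hT_tail ht)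
  have hTp : ∫ ω, T ω ∂μ = p :=
    integral_eq_of_tendsto_of_integral_eq hmeas (fun m => abs_avgIndicator_le_one _) hlim
      fun m => by
        rw [← setIntegral_univ]
        exact setIntegral_avgIndicator hB (block_nonempty m) fun j _ => by rw [Set.univ_inter, hp]
  have hTq : ∫ ω in B 0, T ω ∂μ = q :=
    integral_eq_of_tendsto_of_integral_eq hmeas (fun m => abs_avgIndicator_le_one _)
      (ae_restrict_of_ae hlim) fun m => setIntegral_avgIndicator hB (block_nonempty m)
        fun j hj => hq 0 j (lt_of_mem_block hj).ne_bot.symm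
  calc q = ∫ ω, (B 0).indicator 1 ω * T ω ∂μ := by
        rw [← hTq, ← integral_indicator (hB 0)]
        congr 1 with ω
        by_cases h : ω ∈ B 0 <;> simp [h]
    _ = p ^ 2 := by
      rw [hindep.integral_fun_mul_eq_mul_integral (by fun_prop (disch := exact hB 0))
        (Measurable.limsup hmeas).aestronglyMeasurable,
        integral_indicator_one (hB 0), hp, hTp, sq]

end Tail

theorem tail_trivial_imp_shift_square_general
    {Ω : Type*} [MeasurableSpace Ω] (μ : Measure Ω) [IsProbabilityMeasure μ]
    (H : Ω → ℕ → ℕ → Bool) (hmeas : Measurable H)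
    (hexch : ∀ σ : Equiv.Perm ℕ, {i | σ i ≠ i}.Finite →
      Measure.map (fun ω => fun i j : ℕ => H ω (σ i) (σ j)) μ = Measure.map H μ)
    (htail : ∀ s : Set Ω,
      MeasurableSet[⨅ n : ℕ, MeasurableSpace.comap
        (fun ω => fun i j : ℕ => H ω (i + n) (j + n)) inferInstance] s →
      μ s = 0 ∨ μ s = 1)
    {k : ℕ} (F : SimpleGraph (Fin k)) :
    μ {ω | (∀ i j : Fin k, F.Adj i j → H ω (i : ℕ) (j : ℕ) = true) ∧
           (∀ i j : Fin k, F.Adj i j → H ω ((i : ℕ) + k) ((j : ℕ) + k) = true)}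
      = μ {ω | ∀ i j : Fin k, F.Adj i j → H ω (i : ℕ) (j : ℕ) = true} ^ 2 := by
  -- Disjoint copies of `F`, spaced `k + 1` apart so that the `j`-th one avoids the vertices `< j`.
  set B : ℕ → Set Ω := fun j => H ⁻¹' containsShift F (j * (k + 1))
  have hB_shift (n j : ℕ) (hnj : n ≤ j) : MeasurableSet[MeasurableSpace.comap
      (fun ω => fun i j : ℕ => H ω (i + n) (j + n)) inferInstance] (B j) :=
    ⟨_, measurableSet_containsShift F (j * (k + 1) - n), congrArg (H ⁻¹' ·)
      (relabel_preimage_containsShift F (τ := (· + n)) fun i => by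
        have := Nat.le_mul_of_pos_right j (show 0 < k + 1 by omega); omega)⟩
  have hq (i j : ℕ) (hij : i ≠ j) :
      μ.real (B i ∩ B j) = μ.real (H ⁻¹' containsShift F 0 ∩ H ⁻¹' containsShift F k) := by
    wlog h : i < j generalizing i j
    · rw [Set.inter_comm, this j i hij.symm (by omega)]
    rw [measureReal_def, measure_preimage_containsShift_inter F hmeas hexch
      (by nlinarith : i * (k + 1) + k ≤ j * (k + 1)), measureReal_def]
  have := measureReal_inter_eq_sq_of_tail_zero_or_one
    (fun j => hmeas (measurableSet_containsShift F _)) hB_shift htail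
    (fun j => congrArg ENNReal.toReal (measure_preimage_containsShift F hmeas hexch _)) hq
  simp only [measureReal_def, ← ENNReal.toReal_pow] at this
  exact (ENNReal.toReal_eq_toReal_iff' (measure_ne_top _ _) (by finiteness)).1 this

/-- If `H` is an exchangeable random infinite graph on `ℕ` whose tail σ-field
`⋂_n σ(H|{n,n+1,…})` is trivial, then for every labelled finite graph `F` on `[k]`,
`P(H ⊇ F ∪ F_k) = P(H ⊇ F)²`, where `F_k` is the copy of `F` shifted to the vertex set
`{k, …, 2k-1}`. -/
theorem tail_trivial_imp_shift_square
    {Ω : Type*} [MeasurableSpace Ω] (μ : Measure Ω) [IsProbabilityMeasure μ]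
    (H : Ω → ℕ → ℕ → Bool) (hmeas : Measurable H)
    (hsym : ∀ ω i j, H ω i j = H ω j i) (hirr : ∀ ω i, H ω i i = false)
    (hexch : ∀ σ : Equiv.Perm ℕ, {i | σ i ≠ i}.Finite →
      Measure.map (fun ω => fun i j : ℕ => H ω (σ i) (σ j)) μ = Measure.map H μ)
    (htail : ∀ s : Set Ω,
      MeasurableSet[⨅ n : ℕ, MeasurableSpace.comap
        (fun ω => fun i j : ℕ => H ω (i + n) (j + n)) inferInstance] s →
      μ s = 0 ∨ μ s = 1)
    {k : ℕ} (F : SimpleGraph (Fin k)) :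
    μ {ω | (∀ i j : Fin k, F.Adj i j → H ω (i : ℕ) (j : ℕ) = true) ∧
           (∀ i j : Fin k, F.Adj i j → H ω ((i : ℕ) + k) ((j : ℕ) + k) = true)}
      = μ {ω | ∀ i j : Fin k, F.Adj i j → H ω (i : ℕ) (j : ℕ) = true} ^ 2 :=
  tail_trivial_imp_shift_square_general μ H hmeas hexch htail F
end
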